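/- arXiv:math/0306357 — 10 statements merged into one kernel-verified Lean document; each statement's English description precedes it below -/
import Mathlib

section
/- For any real numbers a < b and any real numbers y₀, y₁, M₀, M₁, N₀, N₁, there exists a unique real polynomial p of degree at most 5 such that p(a) = y₀, p(b) = y₁, p''(a) = M₀, p''(b) = M₁, p''''(a) = N₀ and p''''(b) = N₁ (here p'', p'''' denote the second and fourth derivatives of p). -/
/-!
The six conditions are linear in `p`. If `p` has degree at most `5` and all six data vanish,
then `p⁽⁴⁾` has vanishing second derivative and two distinct roots, so `p⁽⁴⁾ = 0`; the same
argument then kills `p''` and finally `p`. Hence the data map is injective on the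
`6`-dimensional space of polynomials of degree at most `5`, and therefore bijective onto `K⁶`.
-/

open Polynomial Finset

namespace Polynomial

theorem natDegree_le_of_iterate_derivative_eq_zero {R : Type*} [Semiring R] [IsAddTorsionFree R]
    {p : R[X]} {k : ℕ} (h : derivative^[k + 1] p = 0) : p.natDegree ≤ k := by
  induction k generalizing p with
  | zero => exact (derivative_eq_zero.mp h).le
  | succ k ih =>
    have := ih (p := derivative p) h
    rw [natDegree_derivative] at this
    omega

variable {R : Type*} [CommRing R] [IsDomain R] [IsAddTorsionFree R]

theorem eq_zero_of_iterate_derivative_eq_zero_of_eval_eq_zero {p : R[X]} {k : ℕ}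
    {s : Finset R} (h : derivative^[k + 1] p = 0) (hs : ∀ x ∈ s, p.eval x = 0) (hk : k < #s) :
    p = 0 :=
  eq_zero_of_natDegree_lt_card_of_eval_eq_zero' p s hs
    ((natDegree_le_of_iterate_derivative_eq_zero h).trans_lt hk)

theorem eq_zero_of_iterate_derivative_two_eq_zero {p : R[X]} {a b : R} (hab : a ≠ b)
    (h : derivative^[2] p = 0) (ha : p.eval a = 0) (hb : p.eval b = 0) : p = 0 := by
  classical
  exact eq_zero_of_iterate_derivative_eq_zero_of_eval_eq_zero (k := 1) (s := {a, b}) h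
    (by simp [ha, hb]) (by simp [card_pair hab])

end Polynomial

section QuinticSpline

variable {K : Type*} [Field K]

noncomputable def quinticSplineData (a b : K) : K[X] →ₗ[K] Fin 6 → K :=
  LinearMap.pi ![leval a, leval b, leval a ∘ₗ derivative ^ 2, leval b ∘ₗ derivative ^ 2,
    leval a ∘ₗ derivative ^ 4, leval b ∘ₗ derivative ^ 4]

theorem quinticSplineData_eq_iff {a b : K} {p : K[X]} {y₀ y₁ M₀ M₁ N₀ N₁ : K} :
    quinticSplineData a b p = ![y₀, y₁, M₀, M₁, N₀, N₁] ↔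
      p.eval a = y₀ ∧ p.eval b = y₁ ∧
      (derivative^[2] p).eval a = M₀ ∧ (derivative^[2] p).eval b = M₁ ∧
      (derivative^[4] p).eval a = N₀ ∧ (derivative^[4] p).eval b = N₁ := by
  simp [quinticSplineData, funext_iff, Fin.forall_fin_succ, Module.End.pow_apply]

variable [CharZero K] {a b : K}

theorem eq_zero_of_quinticSplineData_eq_zero (hab : a ≠ b) {p : K[X]} (hp : p.degree ≤ 5)
    (h : quinticSplineData a b p = 0) : p = 0 := by
  have h0 : quinticSplineData a b p = ![0, 0, 0, 0, 0, 0] := by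
    rw [h]; ext i; fin_cases i <;> rfl
  obtain ⟨ha, hb, h2a, h2b, h4a, h4b⟩ := quinticSplineData_eq_iff.mp h0
  have h6 : derivative^[6] p = 0 :=
    iterate_derivative_eq_zero_of_degree_lt (hp.trans_lt (by norm_num))
  have h4 : derivative^[4] p = 0 :=
    eq_zero_of_iterate_derivative_two_eq_zero hab (by rwa [← Function.iterate_add_apply]) h4a h4b
  have h2 : derivative^[2] p = 0 :=
    eq_zero_of_iterate_derivative_two_eq_zero hab (by rwa [← Function.iterate_add_apply]) h2a h2b
  exact eq_zero_of_iterate_derivative_two_eq_zero hab h2 ha hb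

theorem quinticSplineData_injOn (hab : a ≠ b) :
    Set.InjOn (quinticSplineData a b) (degreeLE K 5) := by
  intro p hp q hq hpq
  rw [← sub_eq_zero]
  refine eq_zero_of_quinticSplineData_eq_zero hab ?_ (by rw [map_sub, hpq, sub_self])
  exact mem_degreeLE.mp ((degreeLE K 5).sub_mem hp hq)

theorem quinticSplineData_surjOn (hab : a ≠ b) :
    Set.SurjOn (quinticSplineData a b) (degreeLE K 5) Set.univ := by
  let e : degreeLE K 5 ≃ₗ[K] Fin 6 → K :=
    (LinearEquiv.ofEq _ _ degreeLT_succ_eq_degreeLE).symm.trans (degreeLTEquiv K 6)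
  have := e.symm.finiteDimensional
  have hinj : Function.Injective ((quinticSplineData a b).domRestrict (degreeLE K 5)) :=
    fun p q h => Subtype.ext (quinticSplineData_injOn hab p.2 q.2 h)
  intro w _
  obtain ⟨p, hp⟩ := (LinearMap.injective_iff_surjective_of_finrank_eq_finrank e.finrank_eq).mp
    hinj w
  exact ⟨p, p.2, hp⟩

end QuinticSpline

theorem quintic_spline_piece_exists_unique (a b : ℝ) (hab : a < b)
    (y₀ y₁ M₀ M₁ N₀ N₁ : ℝ) :
    ∃! p : Polynomial ℝ, p.degree ≤ 5 ∧
      p.eval a = y₀ ∧ p.eval b = y₁ ∧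
      (derivative^[2] p).eval a = M₀ ∧ (derivative^[2] p).eval b = M₁ ∧
      (derivative^[4] p).eval a = N₀ ∧ (derivative^[4] p).eval b = N₁ := by
  simp only [← quinticSplineData_eq_iff, ← mem_degreeLE]
  obtain ⟨p, hp, hpd⟩ :=
    quinticSplineData_surjOn hab.ne (Set.mem_univ ![y₀, y₁, M₀, M₁, N₀, N₁])
  exact ⟨p, ⟨hp, hpd⟩,
    fun q hq => quinticSplineData_injOn hab.ne hq.1 hp (hq.2.trans hpd.symm)⟩
end

section
/- Let h > 0, let a ∈ ℝ, and let p be a real polynomial of degree at most 5. Set b = a + h. Then p'(b) = (h/6)·(2·p''(b) + p''(a)) − (h³/360)·(8·p''''(b) + 7·p''''(a)) + (1/h)·(p(b) − p(a)). -/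
open Polynomial

/-! Expand `p`, `p''` and `p''''` in Taylor series at `b` with step `-h`. As `p` is quintic, these
expansions are exact and involve only `p⁽ᵏ⁾(b)` for `k ≤ 5`, so the identity becomes a polynomial
identity in `h` and these six values. -/

namespace Polynomial

theorem eval_add_eq_sum_range_iterate_derivative {K : Type*} [Field K] [CharZero K]
    {p : K[X]} {n : ℕ} (hp : p.natDegree < n) (x t : K) :
    p.eval (x + t) = ∑ k ∈ Finset.range n, (derivative^[k] p).eval x / k.factorial * t ^ k := by
  rw [add_comm, ← taylor_eval, eval_eq_sum_range' ((natDegree_taylor p x).trans_lt hp)]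
  refine Finset.sum_congr rfl fun k _ => ?_
  rw [taylor_coeff, ← factorial_smul_hasseDeriv, LinearMap.smul_apply, nsmul_eq_mul, eval_mul,
    eval_natCast, mul_div_cancel_left₀ _ (Nat.cast_ne_zero.2 k.factorial_ne_zero)]

end Polynomial

theorem quintic_spline_identity_2_16 (h a : ℝ) (hh : 0 < h)
    (p : Polynomial ℝ) (hp : p.degree ≤ 5) (b : ℝ) (hb : b = a + h) :
    (derivative p).eval b =
      (h / 6) * (2 * (derivative^[2] p).eval b + (derivative^[2] p).eval a)
        - (h ^ 3 / 360) * (8 * (derivative^[4] p).eval b + 7 * (derivative^[4] p).eval a)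
        + (1 / h) * (p.eval b - p.eval a) := by
  have hdeg : p.natDegree < 6 := Nat.lt_succ_of_le (natDegree_le_iff_degree_le.2 hp)
  have hderiv_deg (j : ℕ) : (derivative^[j] p).natDegree < 6 :=
    (natDegree_iterate_derivative p j).trans_lt (by omega)
  rw [show a = b + -h by linarith]
  simp only [eval_add_eq_sum_range_iterate_derivative (hderiv_deg _),
    eval_add_eq_sum_range_iterate_derivative hdeg, Finset.sum_range_succ, Finset.sum_range_zero,
    ← Function.iterate_add_apply]
  simp (disch := omega) only [iterate_derivative_eq_zero, Function.iterate_zero_apply,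
    Function.iterate_one, eval_zero, Nat.factorial]
  field_simp
  ring
end

section
/- Let h > 0, let a ∈ ℝ, and let p be a real polynomial of degree at most 5. Set b = a + h. Then p'(a) = −(h/6)·(2·p''(a) + p''(b)) + (h³/360)·(8·p''''(a) + 7·p''''(b)) + (1/h)·(p(b) − p(a)). -/
/-!
A polynomial of degree at most 5 coincides with its Taylor expansion at `a`, so `p(b)`, `p''(b)`
and `p''''(b)` are polynomials in `h` whose coefficients are the derivatives `p⁽ᵏ⁾(a)`,
`k ≤ 5`. Substituting these expansions turns the claim into an identity between polynomials in
`h` and these six numbers, which holds after clearing the denominator `h`.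
-/

open Polynomial
open scoped Nat

namespace Polynomial

theorem eval_add_eq_sum_range_hasseDeriv {R : Type*} [CommSemiring R] {q : R[X]} {n : ℕ}
    (hq : q.natDegree ≤ n) (a h : R) :
    q.eval (a + h) = ∑ k ∈ Finset.range (n + 1), (hasseDeriv k q).eval a * h ^ k := by
  rw [add_comm, ← taylor_eval,
    eval_eq_sum_range' ((natDegree_taylor q a).trans_lt (Nat.lt_succ_of_le hq))]
  simp only [taylor_coeff]

theorem eval_add_iterate_derivative_eq_sum_range {K : Type*} [Field K] [CharZero K] {p : K[X]}
    {m n : ℕ} (hp : p.natDegree ≤ m + n) (a h : K) :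
    (derivative^[m] p).eval (a + h) =
      ∑ k ∈ Finset.range (n + 1), (derivative^[m + k] p).eval a / k ! * h ^ k := by
  have hq : (derivative^[m] p).natDegree ≤ n :=
    (natDegree_iterate_derivative p m).trans (by omega)
  rw [eval_add_eq_sum_range_hasseDeriv hq]
  refine Finset.sum_congr rfl fun k _ => ?_
  rw [add_comm m k, Function.iterate_add_apply,
    ← congrFun (factorial_smul_hasseDeriv k) (derivative^[m] p), LinearMap.smul_apply, eval_smul,
    nsmul_eq_mul, mul_div_cancel_left₀ _ (mod_cast k.factorial_ne_zero)]

end Polynomial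

theorem quintic_spline_identity_2_17 (h a : ℝ) (hh : 0 < h)
    (p : Polynomial ℝ) (hp : p.degree ≤ 5) (b : ℝ) (hb : b = a + h) :
    (derivative p).eval a =
      -(h / 6) * (2 * (derivative^[2] p).eval a + (derivative^[2] p).eval b)
        + (h ^ 3 / 360) * (8 * (derivative^[4] p).eval a + 7 * (derivative^[4] p).eval b)
        + (1 / h) * (p.eval b - p.eval a) := by
  subst hb
  have hdeg : p.natDegree ≤ 5 := natDegree_le_iff_degree_le.mpr (mod_cast hp)
  have expand_p := eval_add_iterate_derivative_eq_sum_range (m := 0) (n := 5) hdeg a h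
  have expand_p2 := eval_add_iterate_derivative_eq_sum_range (m := 2) (n := 3) hdeg a h
  have expand_p4 := eval_add_iterate_derivative_eq_sum_range (m := 4) (n := 1) hdeg a h
  simp only [Finset.sum_range_succ, Finset.sum_range_zero, Nat.reduceAdd, Nat.factorial,
    zero_add, Function.iterate_zero_apply, Function.iterate_one] at expand_p expand_p2 expand_p4 ⊢
  rw [expand_p, expand_p2, expand_p4]
  field_simp [hh.ne']
  ring
end

section
/- Let h > 0 and t ∈ ℝ. Let p and q be real polynomials of degree at most 5 such that for every r = 0, 1, 2, 3, 4 the r-th derivative of p and of q agree at t. Then p''''(t−h) + 4·p''''(t) + q''''(t+h) − (6/h²)·(p''(t−h) − 2·p''(t) + q''(t+h)) = 0. -/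
/-!
Expand `p''`, `p''''` about `t` towards `t - h` and `q''`, `q''''` towards `t + h` by Taylor's
formula. The join conditions identify the Taylor coefficients of orders `2, 3, 4`, the odd terms
of `p''` cancel against those of `q''`, and what survives of the jump `d = q⁽⁵⁾(t) - p⁽⁵⁾(t)` is
`h d` from the fourth derivatives and `(6 / h²) (h³ / 6) d = h d` from the second ones.
-/

open Polynomial Finset Nat

namespace Polynomial

variable {K : Type*} [Field K] [CharZero K]

theorem eval_hasseDeriv_eq_eval_iterate_derivative_div (k : ℕ) (f : K[X]) (t : K) :
    (hasseDeriv k f).eval t = (derivative^[k] f).eval t / k ! := by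
  rw [← factorial_smul_hasseDeriv, LinearMap.smul_apply, eval_smul, nsmul_eq_mul,
    mul_div_cancel_left₀ _ (Nat.cast_ne_zero.mpr (factorial_ne_zero k))]

theorem eval_add_eq_sum_range_iterate_derivative_s3 {f : K[X]} {n : ℕ} (hf : f.natDegree ≤ n)
    (t x : K) :
    f.eval (t + x) = ∑ j ∈ range (n + 1), (derivative^[j] f).eval t / j ! * x ^ j := by
  have hlt : (taylor t f).natDegree < n + 1 := (natDegree_taylor f t).symm ▸ Nat.lt_succ_of_le hf
  rw [add_comm, ← taylor_eval, eval_eq_sum_range' hlt]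
  simp only [taylor_coeff, eval_hasseDeriv_eq_eval_iterate_derivative_div]

theorem eval_iterate_derivative_add_eq_sum_range {f : K[X]} {n k : ℕ}
    (hf : f.natDegree ≤ n + k) (t x : K) :
    (derivative^[k] f).eval (t + x) =
      ∑ j ∈ range (n + 1), (derivative^[k + j] f).eval t / j ! * x ^ j := by
  have hdeg : (derivative^[k] f).natDegree ≤ n :=
    (natDegree_iterate_derivative f k).trans (by omega)
  simp only [eval_add_eq_sum_range_iterate_derivative_s3 hdeg, add_comm k,
    Function.iterate_add_apply]

end Polynomial

theorem quintic_spline_identity_2_13 (h t : ℝ) (hh : 0 < h)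
    (p q : Polynomial ℝ) (hp : p.degree ≤ 5) (hq : q.degree ≤ 5)
    (hjoin : ∀ r : ℕ, r ≤ 4 →
      (derivative^[r] p).eval t = (derivative^[r] q).eval t) :
    (derivative^[4] p).eval (t - h) + 4 * (derivative^[4] p).eval t
        + (derivative^[4] q).eval (t + h)
      - (6 / h ^ 2) * ((derivative^[2] p).eval (t - h)
        - 2 * (derivative^[2] p).eval t + (derivative^[2] q).eval (t + h)) = 0 := by
  have hp5 : p.natDegree ≤ 5 := natDegree_le_iff_degree_le.mpr hp
  have hq5 : q.natDegree ≤ 5 := natDegree_le_iff_degree_le.mpr hq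
  rw [sub_eq_add_neg t h,
    eval_iterate_derivative_add_eq_sum_range (n := 1) hp5,
    eval_iterate_derivative_add_eq_sum_range (n := 1) hq5,
    eval_iterate_derivative_add_eq_sum_range (n := 3) hp5,
    eval_iterate_derivative_add_eq_sum_range (n := 3) hq5]
  simp only [sum_range_succ, sum_range_zero, Nat.reduceAdd,
    ← hjoin 2 (by norm_num), ← hjoin 3 (by norm_num), ← hjoin 4 (by norm_num)]
  field_simp
  ring
end

section
/- Let h > 0 and t ∈ ℝ. Let p and q be real polynomials of degree at most 5 such that for every r = 0, 1, 2, 3, 4 the r-th derivative of p and of q agree at t. Then 60·h·(p'(t−h) + 2·p'(t) + q'(t+h)) − h³·(3·p'''(t−h) + 14·p'''(t) + 3·q'''(t+h)) = 120·(q(t+h) − p(t−h)). -/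
/-! Expand every value in the identity by Taylor's formula at the knot `t`. The quintics `p` and
`q` then share all Taylor coefficients there except the fifth ones, whose contributions agree on
both sides, and what is left is a polynomial identity in `h`. -/

open Polynomial

theorem Polynomial.eval_iterate_derivative_eq_factorial_mul {R : Type*} [Semiring R] (k : ℕ)
    (f : R[X]) (t : R) : (derivative^[k] f).eval t = k.factorial * (hasseDeriv k f).eval t := by
  rw [← factorial_smul_hasseDeriv, LinearMap.smul_apply, eval_smul, nsmul_eq_mul]

theorem Polynomial.eval_add_eq_sum_range_iterate_derivative_s4 {K : Type*} [Field K] [CharZero K]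
    {f : K[X]} {n : ℕ} (hf : f.natDegree < n) (t s : K) :
    f.eval (t + s) = ∑ k ∈ Finset.range n, (derivative^[k] f).eval t / k.factorial * s ^ k := by
  rw [add_comm, ← taylor_eval, eval_eq_sum_range' (by rwa [natDegree_taylor])]
  refine Finset.sum_congr rfl fun k _ => ?_
  rw [taylor_coeff, eval_iterate_derivative_eq_factorial_mul,
    mul_div_cancel_left₀ _ (mod_cast k.factorial_ne_zero)]

theorem Polynomial.eval_iterate_derivative_add_eq_sum_range_s4 {K : Type*} [Field K] [CharZero K]
    {f : K[X]} {n : ℕ} (hf : f.natDegree < n) (k : ℕ) (t s : K) :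
    (derivative^[k] f).eval (t + s) =
      ∑ j ∈ Finset.range (n - k), (derivative^[j + k] f).eval t / j.factorial * s ^ j := by
  rcases lt_or_ge k n with hk | hk
  · simp only [Function.iterate_add_apply]
    exact eval_add_eq_sum_range_iterate_derivative_s4
      ((natDegree_iterate_derivative f k).trans_lt (by omega)) t s
  · rw [iterate_derivative_eq_zero (by omega), Nat.sub_eq_zero_of_le hk]
    simp

theorem quintic_spline_identity_2_14_general (h t : ℝ)
    (p q : Polynomial ℝ) (hp : p.degree ≤ 5) (hq : q.degree ≤ 5)
    (hjoin : ∀ r : ℕ, r ≤ 4 →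
      (derivative^[r] p).eval t = (derivative^[r] q).eval t) :
    60 * h * ((derivative p).eval (t - h) + 2 * (derivative p).eval t
        + (derivative q).eval (t + h))
      - h ^ 3 * (3 * (derivative^[3] p).eval (t - h)
        + 14 * (derivative^[3] p).eval t + 3 * (derivative^[3] q).eval (t + h))
      = 120 * (q.eval (t + h) - p.eval (t - h)) := by
  have hp6 : p.natDegree < 6 := Nat.lt_succ_of_le (natDegree_le_of_degree_le hp)
  have hq6 : q.natDegree < 6 := Nat.lt_succ_of_le (natDegree_le_of_degree_le hq)
  have p0 := eval_iterate_derivative_add_eq_sum_range_s4 hp6 0 t (-h)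
  have p1 := eval_iterate_derivative_add_eq_sum_range_s4 hp6 1 t (-h)
  have p3 := eval_iterate_derivative_add_eq_sum_range_s4 hp6 3 t (-h)
  have q0 := eval_iterate_derivative_add_eq_sum_range_s4 hq6 0 t h
  have q1 := eval_iterate_derivative_add_eq_sum_range_s4 hq6 1 t h
  have q3 := eval_iterate_derivative_add_eq_sum_range_s4 hq6 3 t h
  have join0 : p.eval t = q.eval t := hjoin 0 (by norm_num)
  have join1 : (derivative p).eval t = (derivative q).eval t := hjoin 1 (by norm_num)
  simp only [Finset.sum_range_succ, Finset.sum_range_zero, Nat.reduceAdd, Nat.reduceSub,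
    Function.iterate_zero_apply, Function.iterate_one, join0, join1, hjoin 2 (by norm_num),
    hjoin 3 (by norm_num), hjoin 4 (by norm_num)] at p0 p1 p3 q0 q1 q3 ⊢
  rw [sub_eq_add_neg t h, p0, p1, p3, q0, q1, q3]
  norm_num [Nat.factorial]
  ring

theorem quintic_spline_identity_2_14 (h t : ℝ) (hh : 0 < h)
    (p q : Polynomial ℝ) (hp : p.degree ≤ 5) (hq : q.degree ≤ 5)
    (hjoin : ∀ r : ℕ, r ≤ 4 →
      (derivative^[r] p).eval t = (derivative^[r] q).eval t) :
    60 * h * ((derivative p).eval (t - h) + 2 * (derivative p).eval t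
        + (derivative q).eval (t + h))
      - h ^ 3 * (3 * (derivative^[3] p).eval (t - h)
        + 14 * (derivative^[3] p).eval t + 3 * (derivative^[3] q).eval (t + h))
      = 120 * (q.eval (t + h) - p.eval (t - h)) :=
  quintic_spline_identity_2_14_general h t p q hp hq hjoin
end

section
/- Let h > 0 and t ∈ ℝ. Let p and q be real polynomials of degree at most 5 such that for every r = 0, 1, 2, 3, 4 the r-th derivative of p and of q agree at t. Then p'(t) = −(h²/120)·(p'''(t−h) + 18·p'''(t) + q'''(t+h)) + (1/(2h))·(q(t+h) − p(t−h)). -/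
/-!
For a polynomial `f` of degree at most five, the fifth-order Taylor terms cancel in
`120 f(t + s) - 2 s³ f'''(t + s)`, which is therefore determined by the derivatives of order at
most four at `t`. Applying this to `p` with `s = -h` and to `q` with `s = h` and subtracting,
the shared derivatives at `t` leave `240 h p'(t) + 36 h³ p'''(t)`, which is the identity
multiplied by `240 h`.
-/

open Polynomial

namespace Polynomial

variable {R : Type*}

theorem derivative_taylor [CommSemiring R] (r : R) (f : R[X]) :
    derivative (taylor r f) = taylor r (derivative f) := by
  simp [taylor_apply, derivative_comp]

theorem iterate_derivative_taylor [CommSemiring R] (r : R) (k : ℕ)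
    (f : R[X]) : derivative^[k] (taylor r f) = taylor r (derivative^[k] f) :=
  Function.Commute.iterate_left (derivative_taylor r) k f

theorem eval_iterate_derivative_taylor [CommSemiring R] (r s : R)
    (k : ℕ) (f : R[X]) :
    (derivative^[k] (taylor r f)).eval s = (derivative^[k] f).eval (s + r) := by
  rw [iterate_derivative_taylor, taylor_eval]

theorem quintic_taylor_identity_at_zero [CommRing R] (g : R[X])
    (hg : g.natDegree ≤ 5) (s : R) :
    120 * g.eval s - 2 * s ^ 3 * (derivative^[3] g).eval s =
      120 * g.eval 0 + 120 * s * (derivative g).eval 0 + 60 * s ^ 2 * (derivative^[2] g).eval 0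
        + 18 * s ^ 3 * (derivative^[3] g).eval 0 + 3 * s ^ 4 * (derivative^[4] g).eval 0 := by
  rw [as_sum_range' g 6 (by omega)]
  simp only [Finset.sum_range_succ, Finset.sum_range_zero, zero_add, map_add,
    Function.iterate_succ_apply', Function.iterate_zero_apply, derivative_monomial,
    eval_add, eval_monomial]
  push_cast
  ring

theorem quintic_taylor_identity [CommRing R] (f : R[X])
    (hf : f.natDegree ≤ 5) (t s : R) :
    120 * f.eval (t + s) - 2 * s ^ 3 * (derivative^[3] f).eval (t + s) =
      120 * f.eval t + 120 * s * (derivative f).eval t + 60 * s ^ 2 * (derivative^[2] f).eval t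
        + 18 * s ^ 3 * (derivative^[3] f).eval t + 3 * s ^ 4 * (derivative^[4] f).eval t := by
  have key := quintic_taylor_identity_at_zero (taylor t f) (by rwa [natDegree_taylor]) s
  simpa only [taylor_eval, derivative_taylor, eval_iterate_derivative_taylor, zero_add,
    add_comm s t] using key

end Polynomial

theorem quintic_spline_identity_2_18 (h t : ℝ) (hh : 0 < h)
    (p q : Polynomial ℝ) (hp : p.degree ≤ 5) (hq : q.degree ≤ 5)
    (hjoin : ∀ r : ℕ, r ≤ 4 →
      (derivative^[r] p).eval t = (derivative^[r] q).eval t) :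
    (derivative p).eval t =
      -(h ^ 2 / 120) * ((derivative^[3] p).eval (t - h)
        + 18 * (derivative^[3] p).eval t + (derivative^[3] q).eval (t + h))
      + (1 / (2 * h)) * (q.eval (t + h) - p.eval (t - h)) := by
  have expand_p := quintic_taylor_identity p (natDegree_le_of_degree_le hp) t (-h)
  have expand_q := quintic_taylor_identity q (natDegree_le_of_degree_le hq) t h
  rw [← sub_eq_add_neg] at expand_p
  have h0 : q.eval t = p.eval t := (hjoin 0 (by norm_num)).symm
  have h1 : (derivative q).eval t = (derivative p).eval t := (hjoin 1 (by norm_num)).symm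
  rw [h0, h1, ← hjoin 2 (by norm_num), ← hjoin 3 (by norm_num), ← hjoin 4 (by norm_num)] at expand_q
  have hh0 : h ≠ 0 := hh.ne'
  linear_combination (norm := (field_simp; ring)) (expand_p - expand_q) / (240 * h)
end

section
/- Let h > 0 and t ∈ ℝ. Let p and q be real polynomials of degree at most 5 such that for every r = 0, 1, 2, 3, 4 the r-th derivative of p and of q agree at t. Then p''(t) = −(h²/120)·(p''''(t−h) + 8·p''''(t) + q''''(t+h)) + (1/h²)·(p(t−h) − 2·p(t) + q(t+h)). -/
open Polynomial

open scoped Nat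

/-!
Expand `p` at `t - h`, `q` at `t + h` and their (linear) fourth derivatives in Taylor series
about `t`. The join conditions identify all Taylor coefficients of order `≤ 4`, and the two
terms on the right each contribute `± h³ (q⁽⁵⁾(t) - p⁽⁵⁾(t)) / 120`, which cancel; what is left is
`p''(t)`.
-/

namespace Polynomial

theorem factorial_mul_eval_hasseDeriv {R : Type*} [CommSemiring R] (f : R[X]) (k : ℕ) (r : R) :
    k ! * (hasseDeriv k f).eval r = (derivative^[k] f).eval r := by
  rw [← factorial_smul_hasseDeriv, LinearMap.smul_apply, nsmul_eq_mul, eval_mul, eval_natCast]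

variable {K : Type*} [Field K] [CharZero K]

theorem eval_eq_sum_range_iterate_derivative {f : K[X]} {n : ℕ} (hf : f.natDegree ≤ n)
    (r x : K) :
    f.eval x = ∑ i ∈ Finset.range (n + 1), (derivative^[i] f).eval r / i ! * (x - r) ^ i := by
  rw [← taylor_eval_sub r f x, eval_eq_sum_range' (n := n + 1) (by rw [natDegree_taylor]; omega)]
  refine Finset.sum_congr rfl fun i _ => ?_
  rw [taylor_coeff, ← factorial_mul_eval_hasseDeriv,
    mul_div_cancel_left₀ _ (Nat.cast_ne_zero.2 i.factorial_ne_zero)]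

theorem eval_iterate_derivative_eq_add_mul {f : K[X]} {k : ℕ} (hf : f.natDegree ≤ k + 1)
    (r x : K) :
    (derivative^[k] f).eval x =
      (derivative^[k] f).eval r + (derivative^[k + 1] f).eval r * (x - r) := by
  have hdeg : (derivative^[k] f).natDegree ≤ 1 :=
    (natDegree_iterate_derivative f k).trans (by omega)
  rw [eval_eq_sum_range_iterate_derivative hdeg r x, Function.iterate_succ_apply']
  simp [Finset.sum_range_succ]

end Polynomial

theorem quintic_spline_identity_2_19 (h t : ℝ) (hh : 0 < h)
    (p q : Polynomial ℝ) (hp : p.degree ≤ 5) (hq : q.degree ≤ 5)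
    (hjoin : ∀ r : ℕ, r ≤ 4 →
      (derivative^[r] p).eval t = (derivative^[r] q).eval t) :
    (derivative^[2] p).eval t =
      -(h ^ 2 / 120) * ((derivative^[4] p).eval (t - h)
        + 8 * (derivative^[4] p).eval t + (derivative^[4] q).eval (t + h))
      + (1 / h ^ 2) * (p.eval (t - h) - 2 * p.eval t + q.eval (t + h)) := by
  have hpn : p.natDegree ≤ 4 + 1 := natDegree_le_iff_degree_le.2 hp
  have hqn : q.natDegree ≤ 4 + 1 := natDegree_le_iff_degree_le.2 hq
  rw [eval_iterate_derivative_eq_add_mul hpn t (t - h),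
    eval_iterate_derivative_eq_add_mul hqn t (t + h),
    eval_eq_sum_range_iterate_derivative hpn t (t - h),
    eval_eq_sum_range_iterate_derivative hqn t (t + h)]
  have hjoin0 : p.eval t = q.eval t := hjoin 0 (by norm_num)
  simp only [Finset.sum_range_succ, Finset.sum_range_zero, Function.iterate_zero_apply,
    hjoin0, hjoin 1 (by norm_num), hjoin 2 (by norm_num), hjoin 3 (by norm_num),
    hjoin 4 (by norm_num)]
  field_simp [hh.ne']
  ring
end

section
/- Let h > 0 and t ∈ ℝ, and set t_j = t + j·h for j = −2, −1, 0, 1, 2. Let p₁, p₂, p₃, p₄ be real polynomials of degree at most 5 such that for every r = 0, 1, 2, 3, 4: the r-th derivatives of p₁ and p₂ agree at t₋₁, the r-th derivatives of p₂ and p₃ agree at t₀, and the r-th derivatives of p₃ and p₄ agree at t₁. Then p₁'(t₋₂) + 26·p₂'(t₋₁) + 66·p₃'(t₀) + 26·p₄'(t₁) + p₄'(t₂) = (5/h)·(−p₁(t₋₂) − 10·p₂(t₋₁) + 10·p₄(t₁) + p₄(t₂)). -/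
/-!
Two consecutive pieces of the spline agree to order 4 at their common knot `tⱼ`, so they differ
by a multiple of `(X - tⱼ)⁵`; hence `p₂, p₃, p₄` are `p₁` plus such jump terms. The five-point
rule holds exactly for every quintic, in particular for `p₁`, and each jump term `(X - tⱼ)⁵` only
enters at the nodes `≥ tⱼ`, where it contributes nothing: e.g. for `j = 1` the contribution is
`5h⁴ - (5/h)·h⁵ = 0`.
-/

open Polynomial

theorem exists_eq_C_mul_X_sub_C_pow_of_iterate_derivative_eval_eq_zero
    {R : Type*} [CommRing R] [IsDomain R] [CharZero R] {q : R[X]} {x : R} {n : ℕ}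
    (hq : q.degree ≤ n) (hroot : ∀ r < n, (derivative^[r] q).eval x = 0) :
    ∃ a : R, q = C a * (X - C x) ^ n := by
  rcases eq_or_ne q 0 with rfl | hq0
  · exact ⟨0, by simp⟩
  have hmult : n ≤ q.rootMultiplicity x := by
    cases n with
    | zero => exact Nat.zero_le _
    | succ k =>
      exact lt_rootMultiplicity_of_isRoot_iterate_derivative hq0 fun m hm ↦
        hroot m (Nat.lt_succ_of_le hm)
  obtain ⟨s, rfl⟩ := (le_rootMultiplicity_iff hq0).mp hmult
  have hs0 : s ≠ 0 := right_ne_zero_of_mul hq0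
  have hs : s.degree ≤ 0 := by
    rw [degree_mul, degree_pow, degree_X_sub_C, nsmul_one, degree_eq_natDegree hs0] at hq
    rw [degree_eq_natDegree hs0]
    norm_cast at hq ⊢
    omega
  exact ⟨s.coeff 0, by rw [mul_comm, ← eq_C_of_degree_le_zero hs]⟩

theorem exists_eq_add_C_mul_X_sub_C_pow_of_iterate_derivative_eval_eq
    {R : Type*} [CommRing R] [IsDomain R] [CharZero R] {p q : R[X]} {x : R} {n : ℕ}
    (hp : p.degree ≤ n) (hq : q.degree ≤ n)
    (hjoin : ∀ r < n, (derivative^[r] p).eval x = (derivative^[r] q).eval x) :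
    ∃ a : R, q = p + C a * (X - C x) ^ n := by
  obtain ⟨a, ha⟩ := exists_eq_C_mul_X_sub_C_pow_of_iterate_derivative_eval_eq_zero
    ((degree_sub_le q p).trans (max_le hq hp)) fun r hr ↦ by
      rw [iterate_derivative_sub, eval_sub, hjoin r hr, sub_self]
  exact ⟨a, by rw [← ha, add_sub_cancel]⟩

theorem quintic_derivative_five_point_identity {p : ℝ[X]} (hp : p.degree ≤ 5) {h : ℝ}
    (hh : h ≠ 0) (t : ℝ) :
    (derivative p).eval (t + (-2 : ℝ) * h) + 26 * (derivative p).eval (t + (-1 : ℝ) * h)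
        + 66 * (derivative p).eval (t + (0 : ℝ) * h) + 26 * (derivative p).eval (t + (1 : ℝ) * h)
        + (derivative p).eval (t + (2 : ℝ) * h)
      = (5 / h) * (-p.eval (t + (-2 : ℝ) * h) - 10 * p.eval (t + (-1 : ℝ) * h)
          + 10 * p.eval (t + (1 : ℝ) * h) + p.eval (t + (2 : ℝ) * h)) := by
  have hdeg : p.natDegree < 6 := Nat.lt_succ_of_le (natDegree_le_of_degree_le hp)
  have hdeg' : (derivative p).natDegree < 6 :=
    (natDegree_derivative_le p).trans_lt (Nat.sub_le _ _ |>.trans_lt hdeg)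
  have hcoeff₆ : p.coeff 6 = 0 := coeff_eq_zero_of_natDegree_lt hdeg
  simp only [eval_eq_sum_range' hdeg, eval_eq_sum_range' hdeg', coeff_derivative,
    Finset.sum_range_succ, Finset.sum_range_zero, hcoeff₆]
  field_simp
  ring

theorem quintic_spline_identity_2_9 (h t : ℝ) (hh : 0 < h)
    (p₁ p₂ p₃ p₄ : Polynomial ℝ)
    (hp₁ : p₁.degree ≤ 5) (hp₂ : p₂.degree ≤ 5)
    (hp₃ : p₃.degree ≤ 5) (hp₄ : p₄.degree ≤ 5)
    (hjoin₁ : ∀ r : ℕ, r ≤ 4 →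
      (derivative^[r] p₁).eval (t + (-1 : ℝ) * h) = (derivative^[r] p₂).eval (t + (-1 : ℝ) * h))
    (hjoin₂ : ∀ r : ℕ, r ≤ 4 →
      (derivative^[r] p₂).eval (t + (0 : ℝ) * h) = (derivative^[r] p₃).eval (t + (0 : ℝ) * h))
    (hjoin₃ : ∀ r : ℕ, r ≤ 4 →
      (derivative^[r] p₃).eval (t + (1 : ℝ) * h) = (derivative^[r] p₄).eval (t + (1 : ℝ) * h)) :
    (derivative p₁).eval (t + (-2 : ℝ) * h) + 26 * (derivative p₂).eval (t + (-1 : ℝ) * h)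
        + 66 * (derivative p₃).eval (t + (0 : ℝ) * h) + 26 * (derivative p₄).eval (t + (1 : ℝ) * h)
        + (derivative p₄).eval (t + (2 : ℝ) * h)
      = (5 / h) * (-p₁.eval (t + (-2 : ℝ) * h) - 10 * p₂.eval (t + (-1 : ℝ) * h)
          + 10 * p₄.eval (t + (1 : ℝ) * h) + p₄.eval (t + (2 : ℝ) * h)) := by
  obtain ⟨a, rfl⟩ := exists_eq_add_C_mul_X_sub_C_pow_of_iterate_derivative_eval_eq hp₁ hp₂
    fun r hr ↦ hjoin₁ r (Nat.le_of_lt_succ hr)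
  obtain ⟨b, rfl⟩ := exists_eq_add_C_mul_X_sub_C_pow_of_iterate_derivative_eval_eq hp₂ hp₃
    fun r hr ↦ hjoin₂ r (Nat.le_of_lt_succ hr)
  obtain ⟨c, rfl⟩ := exists_eq_add_C_mul_X_sub_C_pow_of_iterate_derivative_eval_eq hp₃ hp₄
    fun r hr ↦ hjoin₃ r (Nat.le_of_lt_succ hr)
  have hp₁_rule := quintic_derivative_five_point_identity hp₁ hh.ne' t
  simp only [derivative_add, derivative_C_mul, derivative_X_sub_C_pow, eval_add, eval_mul,
    eval_pow, eval_sub, eval_X, eval_C] at hp₁_rule ⊢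
  field_simp at hp₁_rule ⊢
  linear_combination hp₁_rule
end

section
/- Let h > 0 and t ∈ ℝ, and set t_j = t + j·h for j = −2, −1, 0, 1, 2. Let p₁, p₂, p₃, p₄ be real polynomials of degree at most 5 such that for every r = 0, 1, 2, 3, 4: the r-th derivatives of p₁ and p₂ agree at t₋₁, the r-th derivatives of p₂ and p₃ agree at t₀, and the r-th derivatives of p₃ and p₄ agree at t₁. Then p₁''(t₋₂) + 26·p₂''(t₋₁) + 66·p₃''(t₀) + 26·p₄''(t₁) + p₄''(t₂) = (20/h²)·(p₁(t₋₂) + 2·p₂(t₋₁) − 6·p₃(t₀) + 2·p₄(t₁) + p₄(t₂)). -/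
/-!
Two quintic pieces that agree to order 4 at a knot `s` differ by `c (X - s)⁵`, so the spline is
`p₁ + a (X - t₋₁)⁵ + b (X - t₀)⁵ + c (X - t₁)⁵`, each power switched on only right of its knot.
The stencil kills every quintic, in particular `p₁`; and each switched-on power contributes the
same multiple of `h³` to both sides, e.g. `20 h³ (66 + 26·8 + 27) = 20 h³ (-6 + 2·32 + 243)`
for the knot `t₋₁`.
-/

open Polynomial

namespace Polynomial

variable {R : Type*} [CommRing R] [IsDomain R] [CharZero R]

theorem exists_eq_C_mul_X_sub_C_pow_of_iterate_derivative_eval_eq_zero {p : R[X]} {s : R}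
    {n : ℕ} (hdeg : p.degree ≤ ↑(n + 1)) (hvan : ∀ m ≤ n, (derivative^[m] p).eval s = 0) :
    ∃ c, p = C c * (X - C s) ^ (n + 1) := by
  rcases eq_or_ne p 0 with rfl | hp
  · exact ⟨0, by simp⟩
  obtain ⟨q, rfl⟩ : (X - C s) ^ (n + 1) ∣ p :=
    (le_rootMultiplicity_iff hp).mp (lt_rootMultiplicity_of_isRoot_iterate_derivative hp hvan)
  have hq : q.natDegree ≤ 0 := by
    have := natDegree_le_of_degree_le hdeg
    rw [natDegree_mul (pow_ne_zero _ (X_sub_C_ne_zero s)) (right_ne_zero_of_mul hp),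
      (monic_X_sub_C s).natDegree_pow, natDegree_X_sub_C] at this
    omega
  exact ⟨q.coeff 0, by rw [mul_comm, ← eq_C_of_natDegree_le_zero hq]⟩

theorem exists_eq_add_C_mul_X_sub_C_pow_of_iterate_derivative_eval_eq {p q : R[X]} {s : R}
    {n : ℕ} (hp : p.degree ≤ ↑(n + 1)) (hq : q.degree ≤ ↑(n + 1))
    (hjoin : ∀ m ≤ n, (derivative^[m] p).eval s = (derivative^[m] q).eval s) :
    ∃ c, q = p + C c * (X - C s) ^ (n + 1) := by
  obtain ⟨c, hc⟩ := exists_eq_C_mul_X_sub_C_pow_of_iterate_derivative_eval_eq_zero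
    ((degree_sub_le q p).trans (max_le hq hp)) (s := s) fun m hm => by
      rw [iterate_map_sub, eval_sub, hjoin m hm, sub_self]
  exact ⟨c, by rw [← hc, add_sub_cancel]⟩

end Polynomial

theorem quintic_spline_stencil_of_degree_le_five {p : ℝ[X]} (hp : p.degree ≤ 5) (t h : ℝ) :
    h ^ 2 * ((derivative^[2] p).eval (t - 2 * h) + 26 * (derivative^[2] p).eval (t - h)
        + 66 * (derivative^[2] p).eval t + 26 * (derivative^[2] p).eval (t + h)
        + (derivative^[2] p).eval (t + 2 * h))
      = 20 * (p.eval (t - 2 * h) + 2 * p.eval (t - h) - 6 * p.eval t + 2 * p.eval (t + h)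
        + p.eval (t + 2 * h)) := by
  rw [as_sum_range' p 6 (Nat.lt_succ_of_le (natDegree_le_of_degree_le hp))]
  simp [Finset.sum_range_succ]
  ring

theorem quintic_spline_identity_2_10 (h t : ℝ) (hh : 0 < h)
    (p₁ p₂ p₃ p₄ : Polynomial ℝ)
    (hp₁ : p₁.degree ≤ 5) (hp₂ : p₂.degree ≤ 5)
    (hp₃ : p₃.degree ≤ 5) (hp₄ : p₄.degree ≤ 5)
    (hjoin₁ : ∀ r : ℕ, r ≤ 4 →
      (derivative^[r] p₁).eval (t + (-1 : ℝ) * h) = (derivative^[r] p₂).eval (t + (-1 : ℝ) * h))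
    (hjoin₂ : ∀ r : ℕ, r ≤ 4 →
      (derivative^[r] p₂).eval (t + (0 : ℝ) * h) = (derivative^[r] p₃).eval (t + (0 : ℝ) * h))
    (hjoin₃ : ∀ r : ℕ, r ≤ 4 →
      (derivative^[r] p₃).eval (t + (1 : ℝ) * h) = (derivative^[r] p₄).eval (t + (1 : ℝ) * h)) :
    (derivative^[2] p₁).eval (t + (-2 : ℝ) * h) + 26 * (derivative^[2] p₂).eval (t + (-1 : ℝ) * h)
        + 66 * (derivative^[2] p₃).eval (t + (0 : ℝ) * h) + 26 * (derivative^[2] p₄).eval (t + (1 : ℝ) * h)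
        + (derivative^[2] p₄).eval (t + (2 : ℝ) * h)
      = (20 / h ^ 2) * (p₁.eval (t + (-2 : ℝ) * h) + 2 * p₂.eval (t + (-1 : ℝ) * h)
          - 6 * p₃.eval (t + (0 : ℝ) * h) + 2 * p₄.eval (t + (1 : ℝ) * h) + p₄.eval (t + (2 : ℝ) * h)) := by
  obtain ⟨a, rfl⟩ := exists_eq_add_C_mul_X_sub_C_pow_of_iterate_derivative_eval_eq hp₁ hp₂ hjoin₁
  obtain ⟨b, rfl⟩ := exists_eq_add_C_mul_X_sub_C_pow_of_iterate_derivative_eval_eq hp₂ hp₃ hjoin₂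
  obtain ⟨c, rfl⟩ := exists_eq_add_C_mul_X_sub_C_pow_of_iterate_derivative_eval_eq hp₃ hp₄ hjoin₃
  rw [div_mul_eq_mul_div, eq_div_iff (by positivity)]
  simp only [iterate_map_add, iterate_derivative_C_mul, iterate_derivative_X_sub_pow, eval_add,
    eval_mul, eval_C, eval_smul, eval_pow, eval_sub, eval_X]
  simp only [neg_mul, one_mul, zero_mul, add_zero, ← sub_eq_add_neg, Nat.reduceAdd,
    Nat.reduceSub, Nat.descFactorial, nsmul_eq_mul]
  linear_combination quintic_spline_stencil_of_degree_le_five hp₁ t h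
end

section
/- Let a < b be reals, let y : ℝ → ℝ be 7 times continuously differentiable on [a, b], and let K ≥ 0 satisfy |y⁽⁷⁾(s)| ≤ K for all s ∈ [a, b]. Let h > 0 and t ∈ ℝ be such that t − 2h and t + 2h lie in [a, b]. Suppose real numbers m₋₂, m₋₁, m₀, m₁, m₂ satisfy m₋₂ + 26·m₋₁ + 66·m₀ + 26·m₁ + m₂ = (5/h)·(−y(t−2h) − 10·y(t−h) + 10·y(t+h) + y(t+2h)). Define λⱼ = mⱼ − y'(t + j·h) for j = −2, −1, 0, 1, 2. Then |λ₋₂ + 26·λ₋₁ + 66·λ₀ + 26·λ₁ + λ₂| ≤ (11/21)·h⁶·K. -/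
/-!
The functional `quinticSplineDefect h t u v` is exact when `u` is a polynomial of degree at most 6
and `v = u'`, so applied to `(y, y')` it only sees the Taylor remainders of `y` (order 7) and of
`y'` (order 6) at `t`. Lagrange's bound at the nodes `t + j h` then gives
`(5/h)(2·2⁷ + 20) h⁷ K / 7! + (2·2⁶ + 52) h⁶ K / 6! = (11/21) h⁶ K`.
-/

open Set
open scoped Nat

theorem iteratedDerivWithin_eq_of_subset {𝕜 F : Type*} [NontriviallyNormedField 𝕜]
    [NormedAddCommGroup F] [NormedSpace 𝕜 F] {f : 𝕜 → F} {s t : Set 𝕜} {x : 𝕜}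
    {n : ℕ} (st : s ⊆ t) (hs : UniqueDiffOn 𝕜 s) (ht : UniqueDiffOn 𝕜 t)
    (hf : ContDiffOn 𝕜 n f t) (hx : x ∈ s) :
    iteratedDerivWithin n f s x = iteratedDerivWithin n f t x := by
  simp only [iteratedDerivWithin_eq_iteratedFDerivWithin,
    iteratedFDerivWithin_subset st hs ht hf hx]

theorem taylorWithinEval_eq_of_subset {E : Type*} [NormedAddCommGroup E] [NormedSpace ℝ E]
    {f : ℝ → E} {s t : Set ℝ} {x₀ : ℝ} {n : ℕ} (st : s ⊆ t) (hs : UniqueDiffOn ℝ s)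
    (ht : UniqueDiffOn ℝ t) (hf : ContDiffOn ℝ n f t) (hx₀ : x₀ ∈ s) (x : ℝ) :
    taylorWithinEval f n s x₀ x = taylorWithinEval f n t x₀ x := by
  simp only [taylor_within_apply]
  refine Finset.sum_congr rfl fun k hk => ?_
  have hkn : (k : WithTop ℕ∞) ≤ n := by
    exact_mod_cast Nat.lt_succ_iff.mp (Finset.mem_range.mp hk)
  rw [iteratedDerivWithin_eq_of_subset st hs ht (hf.of_le hkn) hx₀]

theorem abs_sub_taylorWithinEval_le {f : ℝ → ℝ} {a b C x₀ x : ℝ} {n : ℕ}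
    (hf : ContDiffOn ℝ (n + 1) f (Icc a b))
    (hC : ∀ s ∈ Icc a b, |iteratedDerivWithin (n + 1) f (Icc a b) s| ≤ C)
    (hx₀ : x₀ ∈ Icc a b) (hx : x ∈ Icc a b) :
    |f x - taylorWithinEval f n (Icc a b) x₀ x| ≤ C * |x - x₀| ^ (n + 1) / (n + 1)! := by
  -- Lagrange's remainder on `[[x₀, x]]`; its intermediate point is interior to `Icc a b`.
  rcases eq_or_ne x₀ x with rfl | hne
  · simp [taylorWithinEval_self]
  have hsub : uIcc x₀ x ⊆ Icc a b := uIcc_subset_Icc hx₀ hx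
  have hab : a < b := by
    rcases hne.lt_or_gt with h | h <;> linarith [hx₀.1, hx₀.2, hx.1, hx.2]
  obtain ⟨ξ, hξ, hrem⟩ := taylor_mean_remainder_lagrange_iteratedDeriv hne (hf.mono hsub)
  have hξ' : ξ ∈ Ioo a b := uIoo_subset_Ioo hx₀ hx hξ
  rw [← taylorWithinEval_eq_of_subset hsub (uniqueDiffOn_uIcc hne) (uniqueDiffOn_Icc hab)
    hf.of_succ left_mem_uIcc, hrem, ← iteratedDerivWithin_eq_iteratedDeriv (uniqueDiffOn_Icc hab)
    (hf.contDiffAt (Icc_mem_nhds hξ'.1 hξ'.2)) (Ioo_subset_Icc_self hξ'), abs_div, abs_mul,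
    abs_pow, Nat.abs_cast]
  gcongr
  exact hC ξ (Ioo_subset_Icc_self hξ')

noncomputable def quinticSplineDefect (h t : ℝ) (u v : ℝ → ℝ) : ℝ :=
  (5 / h) * (-u (t - 2 * h) - 10 * u (t - h) + 10 * u (t + h) + u (t + 2 * h))
    - (v (t - 2 * h) + 26 * v (t - h) + 66 * v t + 26 * v (t + h) + v (t + 2 * h))

theorem quinticSplineDefect_sub (h t : ℝ) (u₁ u₂ v₁ v₂ : ℝ → ℝ) :
    quinticSplineDefect h t (u₁ - u₂) (v₁ - v₂)
      = quinticSplineDefect h t u₁ v₁ - quinticSplineDefect h t u₂ v₂ := by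
  simp only [quinticSplineDefect, Pi.sub_apply]
  ring

theorem quinticSplineDefect_taylorWithinEval {h : ℝ} (hh : h ≠ 0) (t : ℝ) (f : ℝ → ℝ)
    (s : Set ℝ) :
    quinticSplineDefect h t (taylorWithinEval f 6 s t) (taylorWithinEval (derivWithin f s) 5 s t)
      = 0 := by
  simp only [quinticSplineDefect, taylor_within_apply, Finset.sum_range_succ,
    Finset.sum_range_zero, smul_eq_mul, ← iteratedDerivWithin_succ']
  field_simp
  norm_num [Nat.factorial]
  ring

theorem abs_quinticSplineDefect_le {h t A B : ℝ} {u v : ℝ → ℝ} (hh : 0 < h)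
    (hu : ∀ x, |x - t| ≤ 2 * h → |u x| ≤ A * |x - t| ^ 7)
    (hv : ∀ x, |x - t| ≤ 2 * h → |v x| ≤ B * |x - t| ^ 6) :
    |quinticSplineDefect h t u v| ≤ (1380 * A + 180 * B) * h ^ 6 := by
  have hdist : ∀ c : ℝ, |c| ≤ 2 → |t + c * h - t| ≤ 2 * h ∧ |t + c * h - t| = |c| * h :=
    fun c hc => by
      rw [add_sub_cancel_left, abs_mul, abs_of_pos hh]
      exact ⟨by nlinarith, rfl⟩
  have hu' : ∀ c : ℝ, |c| ≤ 2 → |u (t + c * h)| ≤ A * (|c| * h) ^ 7 := fun c hc => by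
    rw [← (hdist c hc).2]; exact hu _ (hdist c hc).1
  have hv' : ∀ c : ℝ, |c| ≤ 2 → |v (t + c * h)| ≤ B * (|c| * h) ^ 6 := fun c hc => by
    rw [← (hdist c hc).2]; exact hv _ (hdist c hc).1
  have u₁ := hu' (-2) (by norm_num)
  have u₂ := hu' (-1) (by norm_num)
  have u₃ := hu' 1 (by norm_num)
  have u₄ := hu' 2 (by norm_num)
  have v₁ := hv' (-2) (by norm_num)
  have v₂ := hv' (-1) (by norm_num)
  have v₃ := hv' 0 (by norm_num)
  have v₄ := hv' 1 (by norm_num)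
  have v₅ := hv' 2 (by norm_num)
  norm_num [← sub_eq_add_neg] at u₁ u₂ u₃ u₄ v₁ v₂ v₃ v₄ v₅
  have hE : |-u (t - 2 * h) - 10 * u (t - h) + 10 * u (t + h) + u (t + 2 * h)|
      ≤ 276 * A * h ^ 7 := by
    refine abs_le.mpr ⟨?_, ?_⟩ <;>
      linarith [abs_le.mp u₁, abs_le.mp u₂, abs_le.mp u₃, abs_le.mp u₄]
  have hF : |v (t - 2 * h) + 26 * v (t - h) + 66 * v t + 26 * v (t + h) + v (t + 2 * h)|
      ≤ 180 * B * h ^ 6 := by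
    refine abs_le.mpr ⟨?_, ?_⟩ <;>
      linarith [abs_le.mp v₁, abs_le.mp v₂, abs_le.mp v₄, abs_le.mp v₅]
  calc |quinticSplineDefect h t u v|
      ≤ |5 / h * (-u (t - 2 * h) - 10 * u (t - h) + 10 * u (t + h) + u (t + 2 * h))|
        + |v (t - 2 * h) + 26 * v (t - h) + 66 * v t + 26 * v (t + h) + v (t + 2 * h)| :=
        abs_sub _ _
    _ = 5 / h * |-u (t - 2 * h) - 10 * u (t - h) + 10 * u (t + h) + u (t + 2 * h)|
        + |v (t - 2 * h) + 26 * v (t - h) + 66 * v t + 26 * v (t + h) + v (t + 2 * h)| := by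
        rw [abs_mul, abs_of_pos (by positivity : (0 : ℝ) < 5 / h)]
    _ ≤ 5 / h * (276 * A * h ^ 7) + 180 * B * h ^ 6 := by gcongr
    _ = (1380 * A + 180 * B) * h ^ 6 := by field_simp; ring

theorem quintic_spline_lemma1_general (a b : ℝ) (y : ℝ → ℝ)
    (hy : ContDiffOn ℝ 7 y (Set.Icc a b)) (K : ℝ)
    (hbound : ∀ s ∈ Set.Icc a b, |iteratedDerivWithin 7 y (Set.Icc a b) s| ≤ K)
    (h t : ℝ) (hh : 0 < h)
    (ht₁ : t - 2 * h ∈ Set.Icc a b) (ht₂ : t + 2 * h ∈ Set.Icc a b)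
    (m : ℤ → ℝ)
    (hm : m (-2) + 26 * m (-1) + 66 * m 0 + 26 * m 1 + m 2
      = (5 / h) * (-y (t - 2 * h) - 10 * y (t - h) + 10 * y (t + h) + y (t + 2 * h)))
    (lam : ℤ → ℝ)
    (hlam : ∀ j : ℤ, -2 ≤ j → j ≤ 2 →
      lam j = m j - derivWithin y (Set.Icc a b) (t + (j : ℝ) * h)) :
    |lam (-2) + 26 * lam (-1) + 66 * lam 0 + 26 * lam 1 + lam 2|
      ≤ (11 / 21) * h ^ 6 * K := by
  set S := Icc a b
  set y' := derivWithin y S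
  have hS : UniqueDiffOn ℝ S := uniqueDiffOn_Icc (by linarith [ht₁.1, ht₂.2])
  have hmem : ∀ x, |x - t| ≤ 2 * h → x ∈ S := fun x hx => by
    obtain ⟨hl, hr⟩ := abs_le.mp hx
    exact ⟨by linarith [ht₁.1], by linarith [ht₂.2]⟩
  have hsum : lam (-2) + 26 * lam (-1) + 66 * lam 0 + 26 * lam 1 + lam 2
      = quinticSplineDefect h t y y' := by
    rw [hlam (-2) (by norm_num) (by norm_num), hlam (-1) (by norm_num) (by norm_num),
      hlam 0 (by norm_num) (by norm_num), hlam 1 (by norm_num) (by norm_num),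
      hlam 2 (by norm_num) (by norm_num), quinticSplineDefect]
    norm_num [← sub_eq_add_neg]
    linear_combination hm
  have ht : t ∈ S := hmem t (by simpa using hh.le)
  have hy_rem : ∀ x, |x - t| ≤ 2 * h →
      |(y - taylorWithinEval y 6 S t) x| ≤ K / 7! * |x - t| ^ 7 := fun x hx => by
    rw [Pi.sub_apply, div_mul_eq_mul_div]
    exact abs_sub_taylorWithinEval_le hy hbound ht (hmem x hx)
  have hy'_rem : ∀ x, |x - t| ≤ 2 * h →
      |(y' - taylorWithinEval y' 5 S t) x| ≤ K / 6! * |x - t| ^ 6 := fun x hx => by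
    rw [Pi.sub_apply, div_mul_eq_mul_div]
    refine abs_sub_taylorWithinEval_le (hy.derivWithin hS (by norm_num)) (fun s hs => ?_) ht
      (hmem x hx)
    rw [← iteratedDerivWithin_succ']
    exact hbound s hs
  calc |lam (-2) + 26 * lam (-1) + 66 * lam 0 + 26 * lam 1 + lam 2|
      = |quinticSplineDefect h t (y - taylorWithinEval y 6 S t)
          (y' - taylorWithinEval y' 5 S t)| := by
        rw [hsum, quinticSplineDefect_sub, quinticSplineDefect_taylorWithinEval hh.ne', sub_zero]
    _ ≤ (1380 * (K / 7!) + 180 * (K / 6!)) * h ^ 6 := abs_quinticSplineDefect_le hh hy_rem hy'_rem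
    _ = 11 / 21 * h ^ 6 * K := by norm_num [Nat.factorial]; ring

theorem quintic_spline_lemma1 (a b : ℝ) (hab : a < b) (y : ℝ → ℝ)
    (hy : ContDiffOn ℝ 7 y (Set.Icc a b)) (K : ℝ) (hK : 0 ≤ K)
    (hbound : ∀ s ∈ Set.Icc a b, |iteratedDerivWithin 7 y (Set.Icc a b) s| ≤ K)
    (h t : ℝ) (hh : 0 < h)
    (ht₁ : t - 2 * h ∈ Set.Icc a b) (ht₂ : t + 2 * h ∈ Set.Icc a b)
    (m : ℤ → ℝ)
    (hm : m (-2) + 26 * m (-1) + 66 * m 0 + 26 * m 1 + m 2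
      = (5 / h) * (-y (t - 2 * h) - 10 * y (t - h) + 10 * y (t + h) + y (t + 2 * h)))
    (lam : ℤ → ℝ)
    (hlam : ∀ j : ℤ, -2 ≤ j → j ≤ 2 →
      lam j = m j - derivWithin y (Set.Icc a b) (t + (j : ℝ) * h)) :
    |lam (-2) + 26 * lam (-1) + 66 * lam 0 + 26 * lam 1 + lam 2|
      ≤ (11 / 21) * h ^ 6 * K :=
  quintic_spline_lemma1_general a b y hy K hbound h t hh ht₁ ht₂ m hm lam hlam
end
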